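/- For every x ∈ ℝ^d one has f(x) ≤ g^A(x) ≤ f(x) + (√A·L²/2)·‖σ‖_op, where ‖σ‖_op denotes the operator norm of σ; in particular the supremum defining g^A(x) is finite for every x. -/

import Mathlib

open MeasureTheory ProbabilityTheory Matrix Filter

noncomputable section

/-- Euclidean inner product on row vectors in `ℝ^d`. -/
def euclInner {d : ℕ} (x y : Fin d → ℝ) : ℝ := ∑ i, x i * y i

/-- Euclidean norm on row vectors in `ℝ^d`. -/
def euclNorm {d : ℕ} (x : Fin d → ℝ) : ℝ := Real.sqrt (∑ i, (x i) ^ 2)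

/-- `g^A(x) := sup_y [ f(x+y) − ⟨yσ⁻¹, y⟩/(2√A) ]`. -/
def gA {d : ℕ} (A : ℝ) (σ : Matrix (Fin d) (Fin d) ℝ) (f : (Fin d → ℝ) → ℝ)
    (x : Fin d → ℝ) : ℝ :=
  sSup {r | ∃ y : Fin d → ℝ, r = f (x + y) - euclInner (y ᵥ* σ⁻¹) y / (2 * Real.sqrt A)}

/-- Operator norm of `σ` acting on row vectors, w.r.t. the Euclidean norm. -/
def opNormM {d : ℕ} (σ : Matrix (Fin d) (Fin d) ℝ) : ℝ :=
  sSup {r | ∃ x : Fin d → ℝ, euclNorm x ≤ 1 ∧ r = euclNorm (x ᵥ* σ)}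

open scoped InnerProductSpace

/-!
Taking `y = 0` gives `f x ≤ g^A(x)`. For the upper bound, Lipschitz continuity gives
`f (x + y) ≤ f x + L ‖y‖`, and positivity of `σ` gives `‖y‖² ≤ ‖σ‖ ⟨yσ⁻¹, y⟩`
(for a positive operator `T`, `‖T v‖² ≤ ‖T‖ ⟪T v, v⟫`; take `v = yσ⁻¹`). Hence every penalized
value is at most `f x + L n - n² / (2 √A ‖σ‖)` with `n = ‖y‖`, a quadratic in `n` whose maximum
is `√A L² ‖σ‖ / 2`.
-/

theorem mul_le_add_div_of_sq_le_mul {L n K q s : ℝ} (hs : 0 < s) (hK : 0 ≤ K) (hq : 0 ≤ q)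
    (h : n ^ 2 ≤ K * q) : L * n ≤ s * L ^ 2 / 2 * K + q / (2 * s) := by
  have hX : 0 ≤ s ^ 2 * L ^ 2 * K + q - 2 * s * L * n := by
    obtain rfl | hK := hK.eq_or_lt
    · obtain rfl : n = 0 := by simpa using h
      linarith
    · nlinarith [sq_nonneg (s * L * K - n)]
  have hdiff : s * L ^ 2 / 2 * K + q / (2 * s) - L * n =
      (s ^ 2 * L ^ 2 * K + q - 2 * s * L * n) / (2 * s) := by
    field_simp
  rw [← sub_nonneg, hdiff]
  exact div_nonneg hX (by positivity)

theorem sub_div_le_add_of_abs_sub_le {V : Type*} [AddCommGroup V] {f N q : V → ℝ} {L K s : ℝ}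
    (hf : ∀ x y, |f x - f y| ≤ L * N (x - y)) (hs : 0 < s) (hK : 0 ≤ K) (hq : ∀ y, 0 ≤ q y)
    (hNq : ∀ y, N y ^ 2 ≤ K * q y) (x y : V) :
    f (x + y) - q y / (2 * s) ≤ f x + s * L ^ 2 / 2 * K := by
  have hLip : f (x + y) - f x ≤ L * N y := by
    simpa using (le_abs_self _).trans (hf (x + y) x)
  linarith [mul_le_add_div_of_sq_le_mul (L := L) hs hK (hq y) (hNq y)]

theorem ContinuousLinearMap.IsPositive.norm_apply_sq_le {E : Type*}
    [NormedAddCommGroup E] [InnerProductSpace ℝ E]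
    {T : E →L[ℝ] E} (hT : T.IsPositive) (v : E) :
    ‖T v‖ ^ 2 ≤ ‖T‖ * ⟪T v, v⟫_ℝ := by
  obtain hT0 | hT0 := (norm_nonneg T).eq_or_lt
  · simp [norm_eq_zero.1 hT0.symm]
  have hTTv : ⟪T (T v), v⟫_ℝ = ‖T v‖ ^ 2 := by
    rw [hT.inner_left_eq_inner_right, real_inner_self_eq_norm_sq]
  have hTTvTv : ‖T‖⁻¹ * ⟪T (T v), T v⟫_ℝ ≤ ‖T v‖ ^ 2 := by
    rw [inv_mul_le_iff₀ hT0]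
    calc ⟪T (T v), T v⟫_ℝ ≤ ‖T (T v)‖ * ‖T v‖ := real_inner_le_norm _ _
      _ ≤ ‖T‖ * ‖T v‖ * ‖T v‖ := by gcongr; exact T.le_opNorm _
      _ = ‖T‖ * ‖T v‖ ^ 2 := by ring
  -- the choice `t = ‖T‖⁻¹` in `0 ≤ ⟪T (v - t • T v), v - t • T v⟫`
  have hpos := hT.inner_nonneg_left (v - ‖T‖⁻¹ • T v)
  simp only [map_sub, map_smul, inner_sub_left, inner_sub_right, real_inner_smul_left,
    real_inner_smul_right, hTTv, real_inner_self_eq_norm_sq] at hpos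
  have : ‖T‖⁻¹ * ‖T v‖ ^ 2 ≤ ⟪T v, v⟫_ℝ := by nlinarith [inv_pos.2 hT0]
  rwa [inv_mul_le_iff₀ hT0] at this

open scoped ComplexOrder in
theorem Matrix.PosSemidef.isPositive_toEuclideanCLM {𝕜 n : Type*} [RCLike 𝕜] [Fintype n]
    [DecidableEq n] {M : Matrix n n 𝕜} (hM : M.PosSemidef) :
    (toEuclideanCLM (𝕜 := 𝕜) M).IsPositive := by
  rw [← ContinuousLinearMap.isPositive_toLinearMap_iff, coe_toEuclideanCLM_eq_toEuclideanLin]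
  exact isPositive_toEuclideanLin_iff.2 hM

lemma Matrix.toEuclideanCLM_toLp_inv_mulVec {𝕜 n : Type*} [RCLike 𝕜] [Fintype n] [DecidableEq n]
    {M : Matrix n n 𝕜} (hM : IsUnit M.det) (y : n → 𝕜) :
    toEuclideanCLM (𝕜 := 𝕜) M (WithLp.toLp 2 (M⁻¹ *ᵥ y)) = WithLp.toLp 2 y := by
  rw [toEuclideanCLM_toLp, mulVec_mulVec, mul_nonsing_inv _ hM, one_mulVec]

lemma euclNorm_eq_norm_toLp {d : ℕ} (x : Fin d → ℝ) : euclNorm x = ‖WithLp.toLp 2 x‖ := by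
  simp [euclNorm, EuclideanSpace.norm_eq]

lemma euclInner_eq_inner_toLp {d : ℕ} (x y : Fin d → ℝ) :
    euclInner x y = ⟪WithLp.toLp 2 x, WithLp.toLp 2 y⟫_ℝ := by
  simp [euclInner, PiLp.inner_apply, mul_comm]

lemma opNormM_eq_norm_toEuclideanCLM {d : ℕ} (σ : Matrix (Fin d) (Fin d) ℝ) :
    opNormM σ = ‖toEuclideanCLM (𝕜 := ℝ) σᵀ‖ := by
  have hnorm (x : Fin d → ℝ) :
      euclNorm (x ᵥ* σ) = ‖toEuclideanCLM (𝕜 := ℝ) σᵀ (WithLp.toLp 2 x)‖ := by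
    rw [toEuclideanCLM_toLp, mulVec_transpose, euclNorm_eq_norm_toLp]
  rw [← ContinuousLinearMap.sSup_unitClosedBall_eq_norm, opNormM]
  congr 1
  ext r
  constructor
  · rintro ⟨x, hx, rfl⟩
    exact ⟨WithLp.toLp 2 x, by simpa [euclNorm_eq_norm_toLp] using hx, (hnorm x).symm⟩
  · rintro ⟨x, hx, rfl⟩
    exact ⟨x.ofLp, by simpa [euclNorm_eq_norm_toLp] using hx, (hnorm x.ofLp).symm⟩

lemma opNormM_nonneg {d : ℕ} (σ : Matrix (Fin d) (Fin d) ℝ) : 0 ≤ opNormM σ :=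
  opNormM_eq_norm_toEuclideanCLM σ ▸ norm_nonneg _

lemma Matrix.IsSymm.euclInner_vecMul_inv {d : ℕ} {σ : Matrix (Fin d) (Fin d) ℝ} (hσ : σ.IsSymm)
    (y : Fin d → ℝ) :
    euclInner (y ᵥ* σ⁻¹) y = ⟪WithLp.toLp 2 y, WithLp.toLp 2 (σ⁻¹ *ᵥ y)⟫_ℝ := by
  rw [← mulVec_transpose, transpose_nonsing_inv, hσ.eq, euclInner_eq_inner_toLp, real_inner_comm]

namespace Matrix.PosDef

variable {d : ℕ} {σ : Matrix (Fin d) (Fin d) ℝ}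

lemma euclInner_vecMul_inv_nonneg (hσ : σ.PosDef) (y : Fin d → ℝ) :
    0 ≤ euclInner (y ᵥ* σ⁻¹) y := by
  have h := hσ.inv.posSemidef.dotProduct_mulVec_nonneg y
  rw [star_trivial, dotProduct_mulVec] at h
  exact h

lemma euclNorm_sq_le_opNormM_mul (hσ : σ.PosDef) (y : Fin d → ℝ) :
    euclNorm y ^ 2 ≤ opNormM σ * euclInner (y ᵥ* σ⁻¹) y := by
  have hσT : σ.IsSymm := isHermitian_iff_isSymm.1 hσ.isHermitian
  have h := hσ.posSemidef.isPositive_toEuclideanCLM.norm_apply_sq_le (WithLp.toLp 2 (σ⁻¹ *ᵥ y))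
  rw [toEuclideanCLM_toLp_inv_mulVec ((isUnit_iff_isUnit_det σ).1 hσ.isUnit)] at h
  rwa [euclNorm_eq_norm_toLp, opNormM_eq_norm_toEuclideanCLM, hσT.eq, hσT.euclInner_vecMul_inv]

end Matrix.PosDef

theorem stmt0 {d : ℕ} (σ : Matrix (Fin d) (Fin d) ℝ) (hσ : σ.PosDef)
    (A : ℝ) (hA : 0 < A) (L : ℝ) (f : (Fin d → ℝ) → ℝ)
    (hf : ∀ x y, |f x - f y| ≤ L * euclNorm (x - y)) :
    ∀ x : Fin d → ℝ,
      BddAbove {r | ∃ y : Fin d → ℝ,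
          r = f (x + y) - euclInner (y ᵥ* σ⁻¹) y / (2 * Real.sqrt A)} ∧
      f x ≤ gA A σ f x ∧
      gA A σ f x ≤ f x + (Real.sqrt A * L ^ 2 / 2) * opNormM σ := by
  intro x
  have hupper : f x + (Real.sqrt A * L ^ 2 / 2) * opNormM σ ∈ upperBounds {r | ∃ y : Fin d → ℝ,
      r = f (x + y) - euclInner (y ᵥ* σ⁻¹) y / (2 * Real.sqrt A)} := by
    rintro _ ⟨y, rfl⟩
    exact sub_div_le_add_of_abs_sub_le hf (Real.sqrt_pos.2 hA) (opNormM_nonneg σ)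
      hσ.euclInner_vecMul_inv_nonneg hσ.euclNorm_sq_le_opNormM_mul x y
  have hfx : f x ∈ {r | ∃ y : Fin d → ℝ,
      r = f (x + y) - euclInner (y ᵥ* σ⁻¹) y / (2 * Real.sqrt A)} :=
    ⟨0, by simp [euclInner]⟩
  exact ⟨⟨_, hupper⟩, le_csSup ⟨_, hupper⟩ hfx, csSup_le ⟨_, hfx⟩ hupper⟩
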